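/- Let P be a row-stochastic matrix on a finite nonempty set S whose ergodicity coefficient satisfies λ_P ≤ λ* for some λ* < 1, let r : S → ℝ with 0 ≤ r(s) ≤ M for all s, let ξ be a stationary probability distribution of P (i.e., ∑_{s∈S} ξ(s) P(z|s) = ξ(z) for all z), and set J = ∑_{s∈S} ξ(s) r(s). Then (i) 0 ≤ J ≤ M; (ii) for each s ∈ S the series V(s) = ∑_{t=0}^∞ ((P^t r)(s) − J) converges absolutely; and (iii) span(V) ≤ 2M/(1 − λ*). -/

import Mathlib

/-- For `f : S → ℝ` on a finite nonempty set `S`, the span is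
`max f - min f`. -/
noncomputable def fnSpan {S : Type*} [Fintype S] [Nonempty S] (f : S → ℝ) : ℝ :=
  Finset.univ.sup' Finset.univ_nonempty f - Finset.univ.inf' Finset.univ_nonempty f

/-- The ergodicity (Dobrushin) coefficient of a row-stochastic matrix `P`
(where `P s z` is the probability of moving from `s` to `z`):
`λ_P = 1 − min_{s,s'} ∑_z min(P(z|s), P(z|s'))`. -/
noncomputable def ergCoeff {S : Type*} [Fintype S] [Nonempty S] (P : S → S → ℝ) : ℝ :=
  1 - Finset.univ.inf' Finset.univ_nonempty
        (fun ss : S × S => ∑ z, min (P ss.1 z) (P ss.2 z))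

/-- The action of a transition matrix `P` on a function `v : S → ℝ`:
`(Pv)(s) = ∑_z P(z|s) v(z)`. -/
noncomputable def matApply {S : Type*} [Fintype S] (P : S → S → ℝ) (v : S → ℝ) : S → ℝ :=
  fun s => ∑ z, P s z * v z

/-!
The ergodicity coefficient is the contraction factor of `P` for the span seminorm: writing
`m = min(P(·|s), P(·|s'))`, the rows `P(·|s) - m` and `P(·|s') - m` are nonnegative with total
mass `1 - ∑ m ≤ λ*`, so `(Pv)(s) - (Pv)(s') ≤ λ* span(v)`. Hence `span(P^t r) ≤ M λ*^t`. Since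
`ξ` is stationary, `J` is the `ξ`-average of every `P^t r`, so it lies between the minimum and
the maximum of `P^t r` and `|(P^t r)(s) - J| ≤ M λ*^t`, a geometric series. Summing the span
bounds termwise gives `span(V) ≤ M / (1 - λ*)`.
-/

open Finset

section WeightedSum

variable {S : Type*} [Fintype S] {w v : S → ℝ}

lemma sum_mul_le_sum_mul_const (hw : ∀ s, 0 ≤ w s) {b : ℝ} (hv : ∀ s, v s ≤ b) :
    ∑ s, w s * v s ≤ (∑ s, w s) * b := by
  rw [sum_mul]
  exact sum_le_sum fun s _ => mul_le_mul_of_nonneg_left (hv s) (hw s)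

lemma sum_mul_const_le_sum_mul (hw : ∀ s, 0 ≤ w s) {a : ℝ} (hv : ∀ s, a ≤ v s) :
    (∑ s, w s) * a ≤ ∑ s, w s * v s := by
  rw [sum_mul]
  exact sum_le_sum fun s _ => mul_le_mul_of_nonneg_left (hv s) (hw s)

end WeightedSum

section Span

variable {S : Type*} [Fintype S] [Nonempty S]

lemma le_sup'_univ (f : S → ℝ) (s : S) : f s ≤ univ.sup' univ_nonempty f :=
  le_sup' f (mem_univ s)

lemma inf'_univ_le (f : S → ℝ) (s : S) : univ.inf' univ_nonempty f ≤ f s :=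
  inf'_le f (mem_univ s)

lemma sub_le_fnSpan (f : S → ℝ) (s s' : S) : f s - f s' ≤ fnSpan f :=
  sub_le_sub (le_sup'_univ f s) (inf'_univ_le f s')

lemma fnSpan_nonneg (f : S → ℝ) : 0 ≤ fnSpan f := by
  obtain ⟨s⟩ := ‹Nonempty S›
  simpa using sub_le_fnSpan f s s

lemma fnSpan_le_of_forall_sub_le {f : S → ℝ} {c : ℝ} (h : ∀ s s', f s - f s' ≤ c) :
    fnSpan f ≤ c := by
  obtain ⟨s, -, hs⟩ := exists_mem_eq_sup' univ_nonempty f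
  obtain ⟨s', -, hs'⟩ := exists_mem_eq_inf' univ_nonempty f
  rw [fnSpan, hs, hs']
  exact h s s'

lemma fnSpan_le_of_mem_Icc {f : S → ℝ} {a b : ℝ} (h : ∀ s, f s ∈ Set.Icc a b) :
    fnSpan f ≤ b - a :=
  fnSpan_le_of_forall_sub_le fun s s' => sub_le_sub (h s).2 (h s').1

lemma fnSpan_sub_const (f : S → ℝ) (a : ℝ) : fnSpan (fun s => f s - a) = fnSpan f :=
  le_antisymm
    (fnSpan_le_of_forall_sub_le fun s s' => by simpa using sub_le_fnSpan f s s')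
    (fnSpan_le_of_forall_sub_le fun s s' => by
      simpa using sub_le_fnSpan (fun s => f s - a) s s')

lemma abs_sub_sum_mul_le_fnSpan {ξ : S → ℝ} (hξ0 : ∀ s, 0 ≤ ξ s) (hξ1 : ∑ s, ξ s = 1)
    (f : S → ℝ) (s : S) : |f s - ∑ z, ξ z * f z| ≤ fnSpan f := by
  have hle := sum_mul_le_sum_mul_const hξ0 (le_sup'_univ f)
  have hge := sum_mul_const_le_sum_mul hξ0 (inf'_univ_le f)
  rw [hξ1, one_mul] at hle hge
  rw [abs_le, fnSpan]
  constructor <;> linarith [le_sup'_univ f s, inf'_univ_le f s]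

lemma fnSpan_tsum_le {f : ℕ → S → ℝ} {c : ℕ → ℝ} (hf : ∀ s, Summable fun t => f t s)
    (hc : Summable c) (hfc : ∀ t, fnSpan (f t) ≤ c t) :
    fnSpan (fun s => ∑' t, f t s) ≤ ∑' t, c t := by
  refine fnSpan_le_of_forall_sub_le fun s s' => ?_
  rw [← (hf s).tsum_sub (hf s')]
  exact ((hf s).sub (hf s')).tsum_le_tsum
    (fun t => (sub_le_fnSpan (f t) s s').trans (hfc t)) hc

end Span

section Contraction

variable {S : Type*} [Fintype S] [Nonempty S] {P : S → S → ℝ}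

lemma one_sub_sum_min_le_ergCoeff (P : S → S → ℝ) (s s' : S) :
    1 - ∑ z, min (P s z) (P s' z) ≤ ergCoeff P :=
  sub_le_sub_left (inf'_le (fun ss : S × S => ∑ z, min (P ss.1 z) (P ss.2 z)) (mem_univ (s, s'))) 1

lemma ergCoeff_nonneg (hP1 : ∀ s, ∑ z, P s z = 1) : 0 ≤ ergCoeff P := by
  obtain ⟨s⟩ := ‹Nonempty S›
  simpa [hP1 s] using one_sub_sum_min_le_ergCoeff P s s

lemma matApply_sub_matApply_le (hP1 : ∀ s, ∑ z, P s z = 1) (v : S → ℝ) (s s' : S) :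
    matApply P v s - matApply P v s' ≤ (1 - ∑ z, min (P s z) (P s' z)) * fnSpan v := by
  set m : S → ℝ := fun z => min (P s z) (P s' z)
  have hmass : ∀ s'', ∑ z, (P s'' z - m z) = 1 - ∑ z, m z := fun s'' => by
    rw [sum_sub_distrib, hP1]
  have hupper := sum_mul_le_sum_mul_const (w := fun z => P s z - m z)
    (fun z => sub_nonneg.2 (min_le_left _ _)) (le_sup'_univ v)
  have hlower := sum_mul_const_le_sum_mul (w := fun z => P s' z - m z)
    (fun z => sub_nonneg.2 (min_le_right _ _)) (inf'_univ_le v)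
  have hsplit : matApply P v s - matApply P v s'
      = ∑ z, (P s z - m z) * v z - ∑ z, (P s' z - m z) * v z := by
    simp only [matApply, sub_mul, sum_sub_distrib]
    ring
  rw [hsplit, fnSpan, mul_sub]
  rw [hmass] at hupper hlower
  linarith

lemma fnSpan_matApply_le (hP1 : ∀ s, ∑ z, P s z = 1) (v : S → ℝ) :
    fnSpan (matApply P v) ≤ ergCoeff P * fnSpan v :=
  fnSpan_le_of_forall_sub_le fun s s' => (matApply_sub_matApply_le hP1 v s s').trans
    (mul_le_mul_of_nonneg_right (one_sub_sum_min_le_ergCoeff P s s') (fnSpan_nonneg v))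

lemma fnSpan_iterate_matApply_le (hP1 : ∀ s, ∑ z, P s z = 1) {lam : ℝ}
    (hlam : ergCoeff P ≤ lam) (v : S → ℝ) (t : ℕ) :
    fnSpan ((matApply P)^[t] v) ≤ lam ^ t * fnSpan v := by
  induction t with
  | zero => simp
  | succ t ih =>
    rw [Function.iterate_succ_apply', pow_succ', mul_assoc]
    have hlam0 := (ergCoeff_nonneg hP1).trans hlam
    exact (fnSpan_matApply_le hP1 _).trans
      (mul_le_mul hlam ih (fnSpan_nonneg _) hlam0)

end Contraction

section Stationary

variable {S : Type*} [Fintype S] {P : S → S → ℝ} {ξ : S → ℝ}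

lemma sum_mul_matApply_of_stationary (hstat : ∀ z, ∑ s, ξ s * P s z = ξ z) (v : S → ℝ) :
    ∑ s, ξ s * matApply P v s = ∑ z, ξ z * v z := by
  simp only [matApply, mul_sum, ← mul_assoc]
  rw [sum_comm]
  simp only [← sum_mul, hstat]

lemma sum_mul_iterate_matApply_of_stationary (hstat : ∀ z, ∑ s, ξ s * P s z = ξ z)
    (v : S → ℝ) (t : ℕ) : ∑ s, ξ s * (matApply P)^[t] v s = ∑ s, ξ s * v s := by
  induction t with
  | zero => rfl
  | succ t ih => rw [Function.iterate_succ_apply', sum_mul_matApply_of_stationary hstat, ih]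

end Stationary

theorem stmt3_general {S : Type*} [Fintype S] [Nonempty S]
    (P : S → S → ℝ)
    (hP1 : ∀ s, ∑ z, P s z = 1)
    (lamStar : ℝ) (hlam : ergCoeff P ≤ lamStar) (hlam1 : lamStar < 1)
    (r : S → ℝ) (M : ℝ) (hr0 : ∀ s, 0 ≤ r s) (hrM : ∀ s, r s ≤ M)
    (ξ : S → ℝ) (hξ0 : ∀ s, 0 ≤ ξ s) (hξ1 : ∑ s, ξ s = 1)
    (hstat : ∀ z, ∑ s, ξ s * P s z = ξ z)
    (J : ℝ) (hJ : J = ∑ s, ξ s * r s) :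
    (0 ≤ J ∧ J ≤ M) ∧
    (∀ s, Summable (fun t : ℕ => |(matApply P)^[t] r s - J|)) ∧
    fnSpan (fun s => ∑' t : ℕ, ((matApply P)^[t] r s - J)) ≤ 2 * M / (1 - lamStar) := by
  have hlam0 : 0 ≤ lamStar := (ergCoeff_nonneg hP1).trans hlam
  have hspan : ∀ t, fnSpan ((matApply P)^[t] r) ≤ lamStar ^ t * M := fun t =>
    (fnSpan_iterate_matApply_le hP1 hlam r t).trans <| mul_le_mul_of_nonneg_left
      (by simpa using fnSpan_le_of_mem_Icc fun s => ⟨hr0 s, hrM s⟩) (pow_nonneg hlam0 t)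
  have hgeom : Summable fun t : ℕ => lamStar ^ t * M :=
    (summable_geometric_of_lt_one hlam0 hlam1).mul_right M
  have hdev : ∀ s, Summable fun t : ℕ => |(matApply P)^[t] r s - J| := fun s =>
    hgeom.of_nonneg_of_le (fun t => abs_nonneg _) fun t => by
      rw [hJ, ← sum_mul_iterate_matApply_of_stationary hstat r t]
      exact (abs_sub_sum_mul_le_fnSpan hξ0 hξ1 _ s).trans (hspan t)
  have hJ0 : 0 ≤ J := by simpa [hJ, hξ1] using sum_mul_const_le_sum_mul hξ0 hr0
  have hJM : J ≤ M := by simpa [hJ, hξ1] using sum_mul_le_sum_mul_const hξ0 hrM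
  refine ⟨⟨hJ0, hJM⟩, hdev, ?_⟩
  calc fnSpan (fun s => ∑' t : ℕ, ((matApply P)^[t] r s - J))
      ≤ ∑' t : ℕ, lamStar ^ t * M :=
        fnSpan_tsum_le (fun s => (hdev s).of_abs) hgeom fun t => by
          rw [fnSpan_sub_const]; exact hspan t
    _ = M / (1 - lamStar) := by
        rw [tsum_mul_right, tsum_geometric_of_lt_one hlam0 hlam1, inv_mul_eq_div]
    _ ≤ 2 * M / (1 - lamStar) := by gcongr; linarith

/-- Lemma 1 of the paper: for a row-stochastic matrix `P` with ergodicity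
coefficient `λ_P ≤ λ* < 1`, a reward `r` with `0 ≤ r ≤ M`, a stationary
distribution `ξ` of `P` and `J = ∑_s ξ(s) r(s)`:
(i) `0 ≤ J ≤ M`; (ii) the series `V(s) = ∑_t ((P^t r)(s) − J)` converges
absolutely; (iii) `span(V) ≤ 2M/(1 − λ*)`. -/
theorem stmt3 {S : Type*} [Fintype S] [Nonempty S]
    (P : S → S → ℝ)
    (hP0 : ∀ s z, 0 ≤ P s z) (hP1 : ∀ s, ∑ z, P s z = 1)
    (lamStar : ℝ) (hlam : ergCoeff P ≤ lamStar) (hlam1 : lamStar < 1)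
    (r : S → ℝ) (M : ℝ) (hr0 : ∀ s, 0 ≤ r s) (hrM : ∀ s, r s ≤ M)
    (ξ : S → ℝ) (hξ0 : ∀ s, 0 ≤ ξ s) (hξ1 : ∑ s, ξ s = 1)
    (hstat : ∀ z, ∑ s, ξ s * P s z = ξ z)
    (J : ℝ) (hJ : J = ∑ s, ξ s * r s) :
    (0 ≤ J ∧ J ≤ M) ∧
    (∀ s, Summable (fun t : ℕ => |(matApply P)^[t] r s - J|)) ∧
    fnSpan (fun s => ∑' t : ℕ, ((matApply P)^[t] r s - J)) ≤ 2 * M / (1 - lamStar) :=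
  stmt3_general P hP1 lamStar hlam hlam1 r M hr0 hrM ξ hξ0 hξ1 hstat J hJ
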